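/- arXiv:2409.14242 — 2 statements merged into one kernel-verified Lean document; each statement's English description precedes it below -/
import Mathlib

section
/- Let H(z), G(z) be row vectors of length q of Laurent polynomials on T^n, and suppose there exist Laurent polynomials k_1,…,k_J and l_1,…,l_J such that 1 − H(z)G(z)* = Σ_{j=1}^J k_j(z) · conj(l_j(z)) for all z ∈ T^n. Then the extended Laplacian pyramid matrices satisfy Φ_{g,h,[k_1,…,k_J]}(z)* · Φ_{h,g,[l_1,…,l_J]}(z) = I_q for all z ∈ T^n. -/
/-!
Pointwise on the torus, `Φ_{h,g,l}` stacks the blocks `H`, `l̄ H` and `I - G* H`.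
Since `(G* H)² = (H G*) G* H`, the product `Φ_{g,h,k}* Φ_{h,g,l}` collapses to
`I + (Σ_j k_j l̄_j - (1 - H G*)) G* H`, and the SVP condition makes the scalar vanish.
-/

open Matrix Complex

/-- The extended Laplacian pyramid matrix `Φ_{h,g,[l_1,…,l_J]}(z)`: row blocks `H(z)`;
`conj(l_j(z))·H(z)` for `j = 1,…,J`; and the `q × q` block `I_q - G(z)* H(z)`.
The data are given by their values at a fixed point `z` of the torus. -/
def extLpMatrix (q J : ℕ) (H G : Fin q → ℂ) (l : Fin J → ℂ) :
    Matrix (Fin 1 ⊕ Fin J ⊕ Fin q) (Fin q) ℂ :=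
  Matrix.of (Sum.elim (fun _ j => H j)
    (Sum.elim (fun j' j => (starRingEnd ℂ) (l j') * H j)
      (fun i j => (if i = j then (1 : ℂ) else 0) - (starRingEnd ℂ) (G i) * H j)))

namespace Matrix

variable {m₁ m₂ n R : Type*}

theorem conjTranspose_fromRows_mul_fromRows [Fintype m₁] [Fintype m₂] [Semiring R] [StarRing R]
    (A₁ B₁ : Matrix m₁ n R) (A₂ B₂ : Matrix m₂ n R) :
    (fromRows A₁ A₂)ᴴ * fromRows B₁ B₂ = A₁ᴴ * B₁ + A₂ᴴ * B₂ := by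
  rw [conjTranspose_fromRows_eq_fromCols_conjTranspose, fromCols_mul_fromRows]

theorem conjTranspose_replicateRow_mul_replicateRow [Semiring R] [StarRing R]
    (u v : n → R) :
    (replicateRow (Fin 1) u)ᴴ * replicateRow (Fin 1) v = vecMulVec (star u) v := by
  rw [conjTranspose_replicateRow]
  exact (vecMulVec_eq (Fin 1) _ _).symm

theorem one_sub_vecMulVec_mul_self [Fintype n] [DecidableEq n] [CommRing R] (u v : n → R) :
    (1 - vecMulVec u v) * (1 - vecMulVec u v) = 1 - (2 - v ⬝ᵥ u) • vecMulVec u v := by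
  rw [sub_mul, one_mul, mul_sub, mul_one, vecMulVec_mul_vecMulVec, vecMulVec_smul, sub_smul,
    two_smul]
  abel

end Matrix

theorem extLpMatrix_eq_fromRows (q J : ℕ) (H G : Fin q → ℂ) (l : Fin J → ℂ) :
    extLpMatrix q J H G l = fromRows (replicateRow (Fin 1) H)
      (fromRows (vecMulVec (star l) H) (1 - vecMulVec (star G) H)) := by
  ext (i | j | i) b <;> simp [extLpMatrix, vecMulVec_apply, one_apply]

theorem conjTranspose_extLpMatrix_mul_extLpMatrix (q J : ℕ) (H G : Fin q → ℂ)
    (k l : Fin J → ℂ) :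
    (extLpMatrix q J G H k)ᴴ * extLpMatrix q J H G l
      = 1 + (k ⬝ᵥ star l - (1 - H ⬝ᵥ star G)) • vecMulVec (star G) H := by
  simp only [extLpMatrix_eq_fromRows, conjTranspose_fromRows_mul_fromRows,
    conjTranspose_replicateRow_mul_replicateRow, conjTranspose_sub, conjTranspose_one,
    conjTranspose_vecMulVec, star_star, vecMulVec_mul_vecMulVec, vecMulVec_smul,
    one_sub_vecMulVec_mul_self]
  module

/-- If the SVP condition `1 - H(z)G(z)* = Σ_j k_j(z) conj(l_j(z))` holds on the `n`-torus,
then `Φ_{g,h,[k_1,…,k_J]}(z)* Φ_{h,g,[l_1,…,l_J]}(z) = I_q` on the `n`-torus. -/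
theorem stmt1 (n q J : ℕ) (H G : (Fin n → ℂ) → Fin q → ℂ)
    (k l : Fin J → (Fin n → ℂ) → ℂ)
    (hSVP : ∀ z : Fin n → ℂ, (∀ i, ‖z i‖ = 1) →
      1 - ∑ j, H z j * (starRingEnd ℂ) (G z j) = ∑ j, k j z * (starRingEnd ℂ) (l j z)) :
    ∀ z : Fin n → ℂ, (∀ i, ‖z i‖ = 1) →
      (extLpMatrix q J (G z) (H z) (fun j => k j z)).conjTranspose *
        extLpMatrix q J (H z) (G z) (fun j => l j z) = 1 := by
  intro z hz
  have hSVP_z : 1 - H z ⬝ᵥ star (G z) = (fun j => k j z) ⬝ᵥ star (fun j => l j z) := hSVP z hz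
  rw [conjTranspose_extLpMatrix_mul_extLpMatrix, hSVP_z, sub_self, zero_smul, add_zero]
end

section
/- Suppose lowpass filters h and g (with polyphase representations H(z), G(z) as length-q row vectors of Laurent polynomials) satisfy the SVP condition 1 − H(z)G(z)* = Σ_{j=1}^J k_j(z) conj(l_j(z)) on T^n, with k_j(1,…,1) = l_j(1,…,1) = 0. Define highpass filters ĥ_j(ω) := ĥ(ω)·conj(l_j(e^{iΛ^Tω})) for j ≤ J, ĥ_{J+1+m}(ω) := q^{−1/2} e^{iν_m·ω} − ĥ(ω)·conj(G_{ν_m}(e^{iΛ^Tω})), and dually ĥ_j^d(ω) := ĝ(ω)·conj(k_j(e^{iΛ^Tω})), ĥ_{J+1+m}^d(ω) := q^{−1/2} e^{iν_m·ω} − ĝ(ω)·conj(H_{ν_m}(e^{iΛ^Tω})). Then for all γ ∈ Γ* and ω: ĥ(ω)conj(ĝ(ω+γ)) + Σ_{i=1}^{J+q} ĥ_i(ω)conj(ĥ_i^d(ω+γ)) = δ_{0γ}. -/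
open Complex Real
open scoped Classical

/-- The mask `f̂(ω) = (1/√q) Σ_m f(m) e^{-iω·m}` of a finitely supported filter. -/
noncomputable def filterHat (n q : ℕ) (f : (Fin n → ℤ) → ℝ) (ω : Fin n → ℝ) : ℂ :=
  (1 / Real.sqrt q : ℝ) *
    ∑ᶠ m : Fin n → ℤ, (f m : ℂ) * Complex.exp (-Complex.I * ((∑ i, ω i * (m i : ℝ) : ℝ) : ℂ))

/-- The z-transform `F_ν(z)` of the polyphase component `f_ν(m) = f(Λm - ν)`. -/
noncomputable def polyZ (n : ℕ) (Λ : Matrix (Fin n) (Fin n) ℤ) (f : (Fin n → ℤ) → ℝ)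
    (ν : Fin n → ℤ) (z : Fin n → ℂ) : ℂ :=
  ∑ᶠ m : Fin n → ℤ, (f (Λ.mulVec m - ν) : ℂ) * ∏ j, z j ^ (-(m j))

/-- The point `e^{iΛᵀω}` of the torus, componentwise `(e^{i(Λᵀω)_j})_j`. -/
noncomputable def expVec (n : ℕ) (Λ : Matrix (Fin n) (Fin n) ℤ) (ω : Fin n → ℝ) :
    Fin n → ℂ :=
  fun j => Complex.exp (Complex.I * ((∑ i, (Λ i j : ℝ) * ω i : ℝ) : ℂ))

/-!
In polyphase form `f̂(ω) = Σ_ν q^{-1/2} e^{iν·ω} F_ν(e^{iΛᵀω})`, because every `m ∈ ℤⁿ` is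
uniquely `Λv - ν`. For `γ ∈ Γ*` the torus point `e^{iΛᵀ(ω+γ)}` equals `e^{iΛᵀω}`, so the MUEP sum
becomes a polynomial identity in the values of `H, G, k, l` at a single point of the torus; the
SVP condition cancels everything except `q⁻¹ Σ_ν e^{-iν·γ}`. That is the sum of the character
`x ↦ e^{-ix·γ}` of `ℤⁿ`, trivial on `Λℤⁿ`, over a transversal of `Λℤⁿ`, hence `δ_{0γ}`.
-/

section Transversal

variable {G K ι : Type*} [AddCommGroup G] [AddCommGroup K]

noncomputable def transversalEquiv (φ : K →+ G) (hφ : Function.Injective φ) (Γ : ι → G)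
    (hΓ : ∀ m, ∃! t, ∃ v, m = Γ t + φ v) : ι × K ≃ G :=
  Equiv.ofBijective (fun p => φ p.2 - Γ p.1) <| by
    refine ⟨fun ⟨t₁, v₁⟩ ⟨t₂, v₂⟩ h => ?_, fun m => ?_⟩
    · have ht : t₁ = t₂ := (hΓ (Γ t₁ - φ v₁)).unique ⟨-v₁, by simp [sub_eq_add_neg]⟩
        ⟨-v₂, by simp only [map_neg] at h ⊢; linear_combination (norm := abel) -h⟩
      subst ht
      exact Prod.ext rfl (hφ (by simpa using h))
    · obtain ⟨t, v, hv⟩ := (hΓ (-m)).exists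
      exact ⟨(t, -v), by simp only [map_neg]; linear_combination (norm := abel) hv⟩

theorem finsum_eq_sum_finsum_of_transversal {M : Type*} [AddCommMonoid M] [Fintype ι]
    (φ : K →+ G) (hφ : Function.Injective φ) (Γ : ι → G)
    (hΓ : ∀ m, ∃! t, ∃ v, m = Γ t + φ v) (f : G → M) (hf : (Function.support f).Finite) :
    ∑ᶠ m, f m = ∑ t, ∑ᶠ v, f (φ v - Γ t) := by
  set e := transversalEquiv φ hφ Γ hΓ
  calc ∑ᶠ m, f m = ∑ᶠ p : ι × K, f (e p) := (finsum_comp_equiv e).symm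
    _ = ∑ᶠ (t) (v), f (φ v - Γ t) :=
      finsum_curry _ (hf.preimage e.injective.injOn)
    _ = ∑ t, ∑ᶠ v, f (φ v - Γ t) := finsum_eq_sum_of_fintype _

theorem AddChar.sum_transversal_eq_zero {R : Type*} [CommRing R] [IsDomain R] [Fintype ι]
    (φ : K →+ G) (Γ : ι → G) (hΓ : ∀ m, ∃! t, ∃ v, m = Γ t + φ v)
    (ψ : AddChar G R) (hψφ : ∀ v, ψ (φ v) = 1) (hψ : ψ ≠ 1) :
    ∑ t, ψ (Γ t) = 0 := by
  obtain ⟨x₀, hx₀⟩ := AddChar.ne_one_iff.1 hψ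
  -- `σ` is translation by `x₀` on `G ⧸ range φ`, read off on the transversal: a permutation.
  choose σ v hσ using fun s => (hΓ (Γ s + x₀)).exists
  have hσψ : ∀ s, ψ (Γ (σ s)) = ψ x₀ * ψ (Γ s) := fun s => by
    rw [mul_comm, ← ψ.map_add_eq_mul, hσ, ψ.map_add_eq_mul, hψφ, mul_one]
  have hσinj : Function.Injective σ := fun s₁ s₂ h => by
    refine (hΓ (Γ s₁)).unique ⟨0, by simp⟩ ⟨v s₁ - v s₂, ?_⟩
    have := congrArg₂ (· - ·) (hσ s₁) (hσ s₂)
    simp only [h, map_sub] at this ⊢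
    linear_combination (norm := abel) this
  have hsum : ∑ s, ψ (Γ s) = ψ x₀ * ∑ s, ψ (Γ s) := by
    rw [Finset.mul_sum, ← (hσinj.bijective_of_finite).sum_comp]
    exact Finset.sum_congr rfl fun s _ => hσψ s
  have hfix : (ψ x₀ - 1) * ∑ s, ψ (Γ s) = 0 := by linear_combination -hsum
  exact (mul_eq_zero.1 hfix).resolve_left (sub_ne_zero.2 hx₀)

end Transversal

/-- The `J` terms contribute `a b̄ Σ K L̄ = a b̄ (1 - Σ H Ḡ)`, which cancels against the cross
terms of the polyphase sum, leaving `Σ (r e)(r e')‾ = δ`. -/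
theorem mixed_extension_identity {R : Type*} [CommRing R] [StarRing R] {ι κ : Type*}
    [Fintype ι] [Fintype κ]
    (a b δ r : R) (H G e e' : ι → R) (K L : κ → R)
    (ha : a = ∑ m, r * e m * H m) (hb : b = ∑ m, r * e' m * G m)
    (hsvp : 1 - ∑ m, H m * star (G m) = ∑ j, K j * star (L j))
    (hchar : ∑ m, r * e m * star (r * e' m) = δ) :
    a * star b + ∑ j, a * star (L j) * star (b * star (K j))
      + ∑ m, (r * e m - a * star (G m)) * star (r * e' m - b * star (H m)) = δ := by
  have hL : ∑ j, a * star (L j) * star (b * star (K j))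
      = a * star b * ∑ j, K j * star (L j) := by
    rw [Finset.mul_sum]
    exact Finset.sum_congr rfl fun j _ => by simp only [star_mul, star_star]; ring
  have hm : ∀ m, (r * e m - a * star (G m)) * star (r * e' m - b * star (H m))
      = r * e m * star (r * e' m) - star b * (r * e m * H m)
        - a * star (r * e' m * G m) + a * star b * (H m * star (G m)) := fun m => by
    simp only [star_sub, star_mul, star_star]; ring
  rw [hL, Finset.sum_congr rfl fun m _ => hm m]
  simp only [Finset.sum_add_distrib, Finset.sum_sub_distrib, ← Finset.mul_sum, ← star_sum]
  rw [hchar, ← ha, ← hb]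
  linear_combination (-(a * star b)) * hsvp

open scoped Matrix

def InDualLattice {n : ℕ} (Λ : Matrix (Fin n) (Fin n) ℤ) (γ : Fin n → ℝ) : Prop :=
  ∃ m : Fin n → ℤ, ∀ i, ∑ j, (Λ.transpose i j : ℝ) * γ j = 2 * π * (m i)

noncomputable def expChar {n : ℕ} (γ : Fin n → ℝ) : AddChar (Fin n → ℤ) ℂ where
  toFun x := exp (-(I * ((∑ i, (x i : ℝ) * γ i : ℝ) : ℂ)))
  map_zero_eq_one' := by simp
  map_add_eq_mul' x y := by
    rw [← Complex.exp_add]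
    simp only [Pi.add_apply, Int.cast_add, add_mul, Finset.sum_add_distrib]
    push_cast
    congr 1
    ring

section Lattice

variable {n : ℕ}

theorem expChar_apply (γ : Fin n → ℝ) (x : Fin n → ℤ) :
    expChar γ x = exp (-(I * ((∑ i, (x i : ℝ) * γ i : ℝ) : ℂ))) := rfl

theorem expChar_mulVec_eq_one {Λ : Matrix (Fin n) (Fin n) ℤ} {γ : Fin n → ℝ}
    (hγ : InDualLattice Λ γ) (w : Fin n → ℤ) : expChar γ (Λ *ᵥ w) = 1 := by
  obtain ⟨m, hm⟩ := hγ
  have hpair : ∑ i, ((Λ *ᵥ w) i : ℝ) * γ i = ((∑ j, w j * m j : ℤ) : ℝ) * (2 * π) := by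
    simp only [Matrix.mulVec, dotProduct, Int.cast_sum, Int.cast_mul, Finset.sum_mul]
    rw [Finset.sum_comm]
    refine Finset.sum_congr rfl fun j _ => ?_
    have hmj := hm j
    simp only [Matrix.transpose_apply] at hmj
    calc ∑ i, (Λ i j : ℝ) * w j * γ i = w j * ∑ i, (Λ i j : ℝ) * γ i := by
          rw [Finset.mul_sum]; exact Finset.sum_congr rfl fun i _ => by ring
      _ = _ := by rw [hmj]; ring
  rw [expChar_apply, hpair, ← Complex.exp_int_mul_two_pi_mul_I (-(∑ j, w j * m j))]
  push_cast
  congr 1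
  ring

theorem exists_eq_two_pi_mul_of_expChar_eq_one {γ : Fin n → ℝ} (h : expChar γ = 1) :
    ∃ v : Fin n → ℤ, γ = fun i => 2 * π * v i := by
  have hcoord : ∀ i, ∃ k : ℤ, γ i = 2 * π * k := fun i => by
    have hi := congrArg (· (Pi.single i 1)) h
    simp only [expChar_apply, AddChar.one_apply, Complex.exp_eq_one_iff] at hi
    obtain ⟨k, hk⟩ := hi
    refine ⟨-k, ?_⟩
    simp only [Pi.single_apply, apply_ite, Int.cast_one, Int.cast_zero, ite_mul, one_mul, zero_mul,
      Finset.sum_ite_eq', Finset.mem_univ, if_true] at hk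
    have hcast : ((γ i : ℝ) : ℂ) = ((2 * π * ((-k : ℤ) : ℝ) : ℝ) : ℂ) := by
      push_cast
      linear_combination I * hk + ((γ i : ℂ) + 2 * π * k) * I_sq
    exact_mod_cast hcast
  choose v hv using hcoord
  exact ⟨v, funext hv⟩

theorem norm_expVec (Λ : Matrix (Fin n) (Fin n) ℤ) (ω : Fin n → ℝ) (j : Fin n) :
    ‖expVec n Λ ω j‖ = 1 := by
  simp [expVec, norm_exp]

theorem expVec_add_of_inDualLattice {Λ : Matrix (Fin n) (Fin n) ℤ} {γ : Fin n → ℝ}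
    (hγ : InDualLattice Λ γ) (ω : Fin n → ℝ) :
    expVec n Λ (fun i => ω i + γ i) = expVec n Λ ω := by
  obtain ⟨m, hm⟩ := hγ
  funext j
  have hshift : ∑ i, (Λ i j : ℝ) * (ω i + γ i) = ∑ i, (Λ i j : ℝ) * ω i + m j * (2 * π) := by
    have hmj := hm j
    simp only [Matrix.transpose_apply] at hmj
    simp only [mul_add, Finset.sum_add_distrib, hmj]
    ring
  rw [expVec, expVec, hshift]
  push_cast
  rw [mul_add, Complex.exp_add, show I * ((m j : ℂ) * (2 * π)) = m j * (2 * π * I) by ring,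
    exp_int_mul_two_pi_mul_I, mul_one]

theorem prod_expVec_zpow (Λ : Matrix (Fin n) (Fin n) ℤ) (ω : Fin n → ℝ) (m : Fin n → ℤ) :
    ∏ j, expVec n Λ ω j ^ (-(m j)) = expChar ω (Λ *ᵥ m) := by
  simp only [expVec, ← exp_int_mul, ← Complex.exp_sum, expChar_apply]
  congr 1
  simp only [Matrix.mulVec, dotProduct]
  push_cast
  simp only [Finset.sum_mul, Finset.mul_sum, ← Finset.sum_neg_distrib]
  rw [Finset.sum_comm]
  exact Finset.sum_congr rfl fun _ _ => Finset.sum_congr rfl fun _ _ => by ring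

end Lattice

section Polyphase

variable {n : ℕ}

theorem filterHat_eq_mul_finsum_expChar (q : ℕ) (f : (Fin n → ℤ) → ℝ) (ω : Fin n → ℝ) :
    filterHat n q f ω = ((1 / √q : ℝ) : ℂ) * ∑ᶠ m, (f m : ℂ) * expChar ω m := by
  rw [filterHat]
  congr 1
  refine finsum_congr fun m => ?_
  rw [expChar_apply, neg_mul]
  simp only [mul_comm (ω _)]

theorem polyZ_expVec (Λ : Matrix (Fin n) (Fin n) ℤ) (f : (Fin n → ℤ) → ℝ) (ν : Fin n → ℤ)
    (ω : Fin n → ℝ) :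
    polyZ n Λ f ν (expVec n Λ ω) = ∑ᶠ v, (f (Λ *ᵥ v - ν) : ℂ) * expChar ω (Λ *ᵥ v) :=
  finsum_congr fun v => by rw [prod_expVec_zpow]

theorem expChar_neg_apply (γ : Fin n → ℝ) (x : Fin n → ℤ) :
    expChar γ (-x) = exp (I * ((∑ i, (x i : ℝ) * γ i : ℝ) : ℂ)) := by
  simp [expChar_apply]

theorem filterHat_eq_sum_polyZ {q : ℕ} {Λ : Matrix (Fin n) (Fin n) ℤ}
    (hΛ : Function.Injective Λ.mulVec) {Γ : Fin q → (Fin n → ℤ)}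
    (hΓ : ∀ m : Fin n → ℤ, ∃! t : Fin q, ∃ v : Fin n → ℤ, m = Γ t + Λ *ᵥ v)
    {f : (Fin n → ℤ) → ℝ} (hf : (Function.support f).Finite) (ω : Fin n → ℝ) :
    filterHat n q f ω = ∑ t, ((1 / √q : ℝ) : ℂ) *
      exp (I * ((∑ i, (Γ t i : ℝ) * ω i : ℝ) : ℂ)) * polyZ n Λ f (Γ t) (expVec n Λ ω) := by
  rw [filterHat_eq_mul_finsum_expChar,
    finsum_eq_sum_finsum_of_transversal Λ.mulVecLin.toAddMonoidHom hΛ Γ hΓ _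
      (hf.subset fun m hm h0 => hm (by simp [h0])), Finset.mul_sum]
  refine Finset.sum_congr rfl fun t _ => ?_
  rw [polyZ_expVec, mul_assoc]
  congr 1
  rw [mul_finsum]
  refine finsum_congr fun v => ?_
  simp only [LinearMap.toAddMonoidHom_coe, Matrix.mulVecLin_apply]
  rw [sub_eq_add_neg, AddChar.map_add_eq_mul, expChar_neg_apply]
  ring

theorem exp_mul_conj_exp_add (ω γ : Fin n → ℝ) (x : Fin n → ℤ) :
    exp (I * ((∑ i, (x i : ℝ) * ω i : ℝ) : ℂ)) *
      starRingEnd ℂ (exp (I * ((∑ i, (x i : ℝ) * (ω i + γ i) : ℝ) : ℂ))) = expChar γ x := by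
  rw [← exp_conj, ← Complex.exp_add, expChar_apply, map_mul, conj_I, conj_ofReal]
  congr 1
  simp only [mul_add, Finset.sum_add_distrib]
  push_cast
  ring

theorem sum_mask_mul_conj_mask {ι : Type*} [Fintype ι] (q : ℕ) (Γ : ι → (Fin n → ℤ))
    (ω γ : Fin n → ℝ) :
    ∑ m, ((1 / √q : ℝ) : ℂ) * exp (I * ((∑ i, (Γ m i : ℝ) * ω i : ℝ) : ℂ)) *
        starRingEnd ℂ (((1 / √q : ℝ) : ℂ) *
          exp (I * ((∑ i, (Γ m i : ℝ) * (ω i + γ i) : ℝ) : ℂ)))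
      = (q : ℂ)⁻¹ * ∑ m, expChar γ (Γ m) := by
  have hr : ((1 / √q : ℝ) : ℂ) * ((1 / √q : ℝ) : ℂ) = (q : ℂ)⁻¹ := by
    rw [← ofReal_mul, div_mul_div_comm, one_mul, Real.mul_self_sqrt q.cast_nonneg]
    push_cast
    ring
  rw [Finset.mul_sum]
  refine Finset.sum_congr rfl fun m _ => ?_
  rw [← exp_mul_conj_exp_add ω γ, ← hr, map_mul, conj_ofReal]
  ring

end Polyphase

theorem sum_expChar_transversal {n q : ℕ} (hq : 0 < q) {Λ : Matrix (Fin n) (Fin n) ℤ}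
    {Γ : Fin q → (Fin n → ℤ)} {γstar : Fin q → (Fin n → ℝ)} (hγ0 : γstar ⟨0, hq⟩ = 0)
    (hΓ : ∀ m : Fin n → ℤ, ∃! t : Fin q, ∃ v : Fin n → ℤ, m = Γ t + Λ *ᵥ v)
    (hmem : ∀ t, InDualLattice Λ (γstar t))
    (hΓstar : ∀ x : Fin n → ℝ, InDualLattice Λ x →
      ∃! t : Fin q, ∃ v : Fin n → ℤ, x = γstar t + fun i => 2 * π * (v i))
    (t : Fin q) :
    ∑ m, expChar (γstar t) (Γ m) = if γstar t = 0 then (q : ℂ) else 0 := by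
  split_ifs with h0
  · simp [h0, expChar_apply]
  refine AddChar.sum_transversal_eq_zero Λ.mulVecLin.toAddMonoidHom Γ hΓ _
    (expChar_mulVec_eq_one (hmem t)) fun h1 => h0 ?_
  -- A trivial character forces `γ ∈ 2πℤⁿ`, the class of `γstar ⟨0, hq⟩ = 0` in `Γ*`.
  obtain ⟨v, hv⟩ := exists_eq_two_pi_mul_of_expChar_eq_one h1
  have ht : t = ⟨0, hq⟩ := (hΓstar _ (hmem t)).unique ⟨0, by ext; simp⟩ ⟨v, by simp [hγ0, hv]⟩
  rw [ht, hγ0]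

theorem stmt7_general (n q J : ℕ) (hq : 0 < q) (Λ : Matrix (Fin n) (Fin n) ℤ)
    (hdet : Λ.det.natAbs = q)
    (Γ : Fin q → (Fin n → ℤ)) (γstar : Fin q → (Fin n → ℝ))
    (hγ0 : γstar ⟨0, hq⟩ = 0)
    (hΓ : ∀ m : Fin n → ℤ, ∃! t : Fin q, ∃ v : Fin n → ℤ, m = Γ t + Λ.mulVec v)
    (hmem : ∀ t : Fin q, ∃ m : Fin n → ℤ,
      ∀ i, ∑ j, (Λ.transpose i j : ℝ) * γstar t j = 2 * π * (m i))
    (hΓstar : ∀ x : Fin n → ℝ,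
      (∃ m : Fin n → ℤ, ∀ i, ∑ j, (Λ.transpose i j : ℝ) * x j = 2 * π * (m i)) →
      ∃! t : Fin q, ∃ v : Fin n → ℤ, x = γstar t + fun i => 2 * π * (v i))
    (h g : (Fin n → ℤ) → ℝ)
    (hsupph : (Function.support h).Finite) (hsuppg : (Function.support g).Finite)
    (k l : Fin J → (Fin n → ℂ) → ℂ)
    -- the SVP condition on the torus:
    (hSVP : ∀ z : Fin n → ℂ, (∀ i, ‖z i‖ = 1) →
      1 - ∑ t : Fin q, polyZ n Λ h (Γ t) z * (starRingEnd ℂ) (polyZ n Λ g (Γ t) z)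
        = ∑ j : Fin J, k j z * (starRingEnd ℂ) (l j z)) :
    ∀ (ω : Fin n → ℝ) (t : Fin q),
      filterHat n q h ω * (starRingEnd ℂ) (filterHat n q g (fun i => ω i + γstar t i))
      + (∑ j : Fin J,
          (filterHat n q h ω * (starRingEnd ℂ) (l j (expVec n Λ ω))) *
            (starRingEnd ℂ) (filterHat n q g (fun i => ω i + γstar t i) *
              (starRingEnd ℂ) (k j (expVec n Λ (fun i => ω i + γstar t i)))))
      + (∑ m : Fin q,
          ((1 / Real.sqrt q : ℝ) *
              Complex.exp (Complex.I * ((∑ i, (Γ m i : ℝ) * ω i : ℝ) : ℂ))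
            - filterHat n q h ω * (starRingEnd ℂ) (polyZ n Λ g (Γ m) (expVec n Λ ω))) *
          (starRingEnd ℂ)
            ((1 / Real.sqrt q : ℝ) *
                Complex.exp (Complex.I *
                  ((∑ i, (Γ m i : ℝ) * (ω i + γstar t i) : ℝ) : ℂ))
              - filterHat n q g (fun i => ω i + γstar t i) *
                  (starRingEnd ℂ)
                    (polyZ n Λ h (Γ m) (expVec n Λ (fun i => ω i + γstar t i)))))
      = if γstar t = 0 then 1 else 0 := by
  intro ω t
  have hΛ : Function.Injective Λ.mulVec :=
    Matrix.mulVec_injective_of_det_ne_zero fun h0 => hq.ne' (by simp [← hdet, h0])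
  have hperiodic := expVec_add_of_inDualLattice (hmem t) ω
  have hb := filterHat_eq_sum_polyZ hΛ hΓ hsuppg (fun i => ω i + γstar t i)
  rw [hperiodic] at hb ⊢
  refine mixed_extension_identity _ _ _ _ _ _ _ _ _ _ (filterHat_eq_sum_polyZ hΛ hΓ hsupph ω) hb
    (hSVP _ (norm_expVec Λ ω)) ?_
  refine (sum_mask_mul_conj_mask q Γ ω (γstar t)).trans ?_
  rw [sum_expChar_transversal hq hγ0 hΓ hmem hΓstar]
  split_ifs
  · exact inv_mul_cancel₀ (Nat.cast_ne_zero.2 hq.ne')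
  · exact mul_zero _

/-- Theorem 3.1 (SVP implies MUEP): if the lowpass filters `h, g` satisfy the SVP condition
with generators `k_j, l_j` vanishing at `1`, then the primal highpass filters
`ĥ_j(ω) = ĥ(ω) conj(l_j(e^{iΛᵀω}))`, `ĥ_{J+1+m}(ω) = q^{-1/2} e^{iν_m·ω} - ĥ(ω) conj(G_{ν_m}(e^{iΛᵀω}))`
and the dual highpass filters (with the roles of `h, g` and `k, l` interchanged) satisfy the
MUEP condition `ĥ(ω) conj(ĝ(ω+γ)) + Σ_i ĥ_i(ω) conj(ĥ_i^d(ω+γ)) = δ_{0γ}`. -/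
theorem stmt7 (n q J : ℕ) (hq : 0 < q) (Λ : Matrix (Fin n) (Fin n) ℤ)
    (hdet : Λ.det.natAbs = q)
    (Γ : Fin q → (Fin n → ℤ)) (γstar : Fin q → (Fin n → ℝ))
    (hΓ0 : Γ ⟨0, hq⟩ = 0) (hγ0 : γstar ⟨0, hq⟩ = 0)
    (hΓ : ∀ m : Fin n → ℤ, ∃! t : Fin q, ∃ v : Fin n → ℤ, m = Γ t + Λ.mulVec v)
    (hmem : ∀ t : Fin q, ∃ m : Fin n → ℤ,
      ∀ i, ∑ j, (Λ.transpose i j : ℝ) * γstar t j = 2 * π * (m i))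
    (hΓstar : ∀ x : Fin n → ℝ,
      (∃ m : Fin n → ℤ, ∀ i, ∑ j, (Λ.transpose i j : ℝ) * x j = 2 * π * (m i)) →
      ∃! t : Fin q, ∃ v : Fin n → ℤ, x = γstar t + fun i => 2 * π * (v i))
    (h g : (Fin n → ℤ) → ℝ)
    (hsupph : (Function.support h).Finite) (hsuppg : (Function.support g).Finite)
    -- h and g are lowpass filters:
    (hlowh : (∑ᶠ m : Fin n → ℤ, h m) = Real.sqrt q)
    (hlowg : (∑ᶠ m : Fin n → ℤ, g m) = Real.sqrt q)
    -- standing assumption: the masks vanish at the nonzero elements of Γ*: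
    (hvanh : ∀ t : Fin q, γstar t ≠ 0 → filterHat n q h (γstar t) = 0)
    (hvang : ∀ t : Fin q, γstar t ≠ 0 → filterHat n q g (γstar t) = 0)
    (k l : Fin J → (Fin n → ℂ) → ℂ)
    -- the SVP condition on the torus:
    (hSVP : ∀ z : Fin n → ℂ, (∀ i, ‖z i‖ = 1) →
      1 - ∑ t : Fin q, polyZ n Λ h (Γ t) z * (starRingEnd ℂ) (polyZ n Λ g (Γ t) z)
        = ∑ j : Fin J, k j z * (starRingEnd ℂ) (l j z))
    (hk1 : ∀ j, k j (fun _ => 1) = 0) (hl1 : ∀ j, l j (fun _ => 1) = 0) :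
    ∀ (ω : Fin n → ℝ) (t : Fin q),
      filterHat n q h ω * (starRingEnd ℂ) (filterHat n q g (fun i => ω i + γstar t i))
      + (∑ j : Fin J,
          (filterHat n q h ω * (starRingEnd ℂ) (l j (expVec n Λ ω))) *
            (starRingEnd ℂ) (filterHat n q g (fun i => ω i + γstar t i) *
              (starRingEnd ℂ) (k j (expVec n Λ (fun i => ω i + γstar t i)))))
      + (∑ m : Fin q,
          ((1 / Real.sqrt q : ℝ) *
              Complex.exp (Complex.I * ((∑ i, (Γ m i : ℝ) * ω i : ℝ) : ℂ))
            - filterHat n q h ω * (starRingEnd ℂ) (polyZ n Λ g (Γ m) (expVec n Λ ω))) *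
          (starRingEnd ℂ)
            ((1 / Real.sqrt q : ℝ) *
                Complex.exp (Complex.I *
                  ((∑ i, (Γ m i : ℝ) * (ω i + γstar t i) : ℝ) : ℂ))
              - filterHat n q g (fun i => ω i + γstar t i) *
                  (starRingEnd ℂ)
                    (polyZ n Λ h (Γ m) (expVec n Λ (fun i => ω i + γstar t i)))))
      = if γstar t = 0 then 1 else 0 :=
  stmt7_general n q J hq Λ hdet Γ γstar hγ0 hΓ hmem hΓstar h g hsupph hsuppg k l hSVP
end
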